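/- arXiv:math/0409107 — 6 statements merged into one kernel-verified Lean document; each statement's English description precedes it below -/
import Mathlib

section
/- Let p be a prime and 1 ≤ k < p. For all t ∈ F_p, the sum b_{k,0}(t) = Σ_{α ∈ S_{k-1,t}} t·π(α) equals (-1)^{k+1} t^k, where S_{k-1,t} is the set of (k-1)-element subsets of F_p not containing t and π(α) is the product of the elements of α. -/
open Finset

/-- `π(α)`: the product of the elements of a finite subset of `ZMod p`. -/
def piProd {p : ℕ} (α : Finset (ZMod p)) : ZMod p := ∏ x ∈ α, x

/-- `σ_j(α)`: the j-th elementary symmetric polynomial evaluated at the elements of `α`. -/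
def esym {p : ℕ} (j : ℕ) (α : Finset (ZMod p)) : ZMod p :=
  ∑ β ∈ α.powersetCard j, ∏ x ∈ β, x

/-- `b_{k,j}(t) = Σ_{α ∈ S_{k-1,t}} t·π(α)·σ_j(α ∪ {t})`, where `S_{k-1,t}` is the set of
(k-1)-element subsets of `F_p` not containing `t`. -/
def bkj (p : ℕ) [NeZero p] (k j : ℕ) (t : ZMod p) : ZMod p :=
  ∑ α ∈ (Finset.univ.erase t).powersetCard (k - 1),
    t * piProd α * esym j (insert t α)

/-- `d_{k,j} = Σ_{α ∈ S_k} π(α)·σ_j(α)`, summing over all k-element subsets of `F_p`. -/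
def dkj (p : ℕ) [NeZero p] (k j : ℕ) : ZMod p :=
  ∑ α ∈ (Finset.univ : Finset (ZMod p)).powersetCard k, piProd α * esym j α

/-! Since `σ_0 = 1`, `b_{k,0}(t) = t · e_{k-1}(F_p ∖ {t})`. Vieta applied to
`X^p - X = ∏_{a ∈ F_p} (X - a)` gives `e_j(F_p) = 0` for `0 < j < p - 1`, and peeling `t` off
`F_p` turns this into `e_{j+1}(F_p ∖ {t}) = -t · e_j(F_p ∖ {t})`, whence `e_j(F_p ∖ {t}) = (-t)^j`. -/

theorem Multiset.esymm_cons_succ {R : Type*} [CommSemiring R] (a : R) (s : Multiset R) (j : ℕ) :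
    (a ::ₘ s).esymm (j + 1) = s.esymm (j + 1) + a * s.esymm j := by
  simp [Multiset.esymm, Multiset.powersetCard_cons, Multiset.map_map, Multiset.sum_map_mul_left]

open Polynomial in
theorem FiniteField.esymm_univ_eq_zero {K : Type*} [Field K] [Fintype K] {j : ℕ} (hj0 : 0 < j)
    (hj : j < Fintype.card K - 1) : (univ.val : Multiset K).esymm j = 0 := by
  set q := Fintype.card K
  have hq : 1 < q := Fintype.one_lt_card
  have hdeg : (X ^ q - X : K[X]).natDegree = q := FiniteField.X_pow_card_sub_X_natDegree_eq K hq
  have hmonic : (X ^ q - X : K[X]).Monic := by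
    apply monic_X_pow_sub
    rw [degree_X]
    exact_mod_cast hq
  have hvieta := coeff_eq_esymm_roots_of_card (p := X ^ q - X) (k := q - j)
    (by rw [FiniteField.roots_X_pow_card_sub_X, hdeg]; rfl) (by omega)
  rw [hdeg, hmonic.leadingCoeff, FiniteField.roots_X_pow_card_sub_X, Nat.sub_sub_self (by omega),
    coeff_sub, coeff_X_pow, coeff_X, if_neg (by omega), if_neg (by omega), sub_zero, one_mul]
    at hvieta
  exact (mul_eq_zero.mp hvieta.symm).resolve_left (pow_ne_zero _ (neg_ne_zero.mpr one_ne_zero))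

theorem FiniteField.esymm_univ_erase {K : Type*} [Field K] [Fintype K] [DecidableEq K] (t : K)
    {j : ℕ} (hj : j < Fintype.card K - 1) : (univ.val.erase t).esymm j = (-t) ^ j := by
  induction j with
  | zero => simp [Multiset.esymm]
  | succ j ih =>
    have h := FiniteField.esymm_univ_eq_zero (K := K) j.succ_pos hj
    rw [← Multiset.cons_erase (mem_univ_val t), Multiset.esymm_cons_succ, ih (by omega)] at h
    rw [pow_succ]
    linear_combination h

theorem esym_zero {p : ℕ} (α : Finset (ZMod p)) : esym 0 α = 1 := by
  simp [esym]

theorem bkj_zero_eq_mul_esymm (p : ℕ) [NeZero p] (k : ℕ) (t : ZMod p) :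
    bkj p k 0 t = t * (univ.val.erase t).esymm (k - 1) := by
  simp only [bkj, esym_zero, mul_one, ← mul_sum, ← erase_val]
  congr 1
  simpa [piProd] using (esymm_map_val id (univ.erase t) (k - 1)).symm

/-- Lemma 2.4 (first part): for 1 <= k < p, b_{k,0}(t) = (-1)^(k+1) * t^k for all t in F_p. -/
theorem bkj_zero_eq (p : ℕ) [Fact p.Prime] (k : ℕ) (hk : 1 ≤ k) (hkp : k < p) (t : ZMod p) :
    bkj p k 0 t = (-1 : ZMod p) ^ (k + 1) * t ^ k := by
  obtain ⟨j, rfl⟩ : ∃ j, k = j + 1 := ⟨k - 1, by omega⟩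
  rw [bkj_zero_eq_mul_esymm, Nat.add_sub_cancel,
    FiniteField.esymm_univ_erase t (by rw [ZMod.card]; omega)]
  ring
end

section
/- Let p be a prime and suppose 0 ≤ j ≤ k with p-1 < k+j < 2p-2. Then d_{k,j} = Σ_{α ∈ S_k} π(α)·σ_j(α) = 0 in F_p, where the sum is over all k-element subsets α of F_p. -/
open Finset

/-! Multiplying every element of `F_p` by a unit `u` permutes the `k`-subsets of `F_p` and
multiplies each summand `π(α) σ_j(α)` of `d_{k,j}` by `u ^ (k + j)`, so
`d_{k,j} = u ^ (k + j) d_{k,j}`. Since `F_pˣ` is cyclic of order `p - 1` and `p - 1 ∤ k + j`,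
some unit has `u ^ (k + j) ≠ 1`, which forces `d_{k,j} = 0`. -/

section Scaling

variable {n : ℕ} (u : (ZMod n)ˣ)

lemma piProd_map_mulLeft (α : Finset (ZMod n)) :
    piProd (α.map (Units.mulLeft u).toEmbedding) = (u : ZMod n) ^ #α * piProd α := by
  simp only [piProd, prod_map, Equiv.coe_toEmbedding, Units.mulLeft_apply]
  rw [prod_mul_distrib, prod_const]

lemma esym_map_mulLeft (j : ℕ) (α : Finset (ZMod n)) :
    esym j (α.map (Units.mulLeft u).toEmbedding) = (u : ZMod n) ^ j * esym j α := by
  rw [esym, powersetCard_map, sum_map, esym, mul_sum]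
  refine sum_congr rfl fun β hβ => ?_
  exact (mem_powersetCard.1 hβ).2 ▸ piProd_map_mulLeft u β

lemma dkj_eq_pow_mul_self [NeZero n] (k j : ℕ) :
    dkj n k j = (u : ZMod n) ^ (k + j) * dkj n k j := by
  conv_lhs => rw [dkj, ← map_univ_equiv (Units.mulLeft u), powersetCard_map, sum_map]
  rw [dkj, mul_sum]
  refine sum_congr rfl fun α hα => ?_
  rw [RelEmbedding.coe_toEmbedding, mapEmbedding_apply, piProd_map_mulLeft, esym_map_mulLeft,
    (mem_powersetCard.1 hα).2, pow_add]
  ring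

end Scaling

lemma ZMod.exists_unit_pow_ne_one {p : ℕ} [Fact p.Prime] {m : ℕ} (hm : ¬ p - 1 ∣ m) :
    ∃ u : (ZMod p)ˣ, u ^ m ≠ 1 := by
  by_contra! h
  refine hm ?_
  rw [← ZMod.card_units p, ← Nat.card_eq_fintype_card, ← IsCyclic.exponent_eq_card]
  exact Monoid.exponent_dvd_iff_forall_pow_eq_one.2 h

theorem dkj_eq_zero_general (p : ℕ) [Fact p.Prime] (k j : ℕ)
    (h1 : p - 1 < k + j) (h2 : k + j < 2 * p - 2) :
    dkj p k j = 0 := by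
  have hndvd : ¬ p - 1 ∣ k + j :=
    Nat.not_dvd_of_lt_of_lt_mul_succ (k := 1) (by omega) (by omega)
  obtain ⟨u, hu⟩ := ZMod.exists_unit_pow_ne_one hndvd
  by_contra hd
  have hpow : (u : ZMod p) ^ (k + j) = 1 := (mul_eq_right₀ hd).1 (dkj_eq_pow_mul_self u k j).symm
  exact hu (Units.ext (by simpa using hpow))

/-- Lemma 2.6 (d part): for 0 <= j <= k with p-1 < k+j < 2p-2, d_{k,j} = 0. -/
theorem dkj_eq_zero (p : ℕ) [Fact p.Prime] (k j : ℕ) (hjk : j ≤ k)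
    (h1 : p - 1 < k + j) (h2 : k + j < 2 * p - 2) :
    dkj p k j = 0 :=
  dkj_eq_zero_general p k j h1 h2
end

section
/- Let p be a prime, and let b, c, j be non-negative integers. Then Σ_{γ ∈ S_c} Σ_{α ∈ S_{b,γ}} σ_j(γ)·π(γ)·π(α) = C(b+c-j, b) · d_{b+c,j} in F_p, where S_c is the set of c-element subsets of F_p, S_{b,γ} is the set of b-element subsets of F_p disjoint from γ, π denotes the product of the elements of a set, σ_j is the j-th elementary symmetric polynomial, and d_{k,j} = Σ_{θ ∈ S_k} π(θ)·σ_j(θ). -/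
/-!
Writing `π(γ)·π(α) = π(γ ∪ α)`, a pair `(γ, α)` of disjoint subsets is the same as a pair
`γ ⊆ θ` with `|θ| = b + c`, so the left side is `Σ_θ π(θ) Σ_{γ ⊆ θ, |γ| = c} σ_j(γ)`.
Expanding `σ_j(γ)` and exchanging the same way, each `j`-subset `β ⊆ θ` lies in
`C(b+c-j, c-j) = C(b+c-j, b)` of the `γ`, which gives `C(b+c-j, b)·σ_j(θ)`.
-/

open Finset

namespace Finset

variable {α M : Type*} [DecidableEq α] [AddCommMonoid M]

theorem sum_powersetCard_sum_powersetCard_sdiff (s : Finset α) (b c : ℕ)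
    (f : Finset α → Finset α → M) :
    ∑ γ ∈ s.powersetCard c, ∑ δ ∈ (s \ γ).powersetCard b, f γ (γ ∪ δ)
      = ∑ θ ∈ s.powersetCard (b + c), ∑ γ ∈ θ.powersetCard c, f γ θ := by
  rw [sum_sigma', sum_sigma']
  refine sum_nbij' (fun x => ⟨x.1 ∪ x.2, x.1⟩) (fun y => ⟨y.2, y.1 \ y.2⟩) ?_ ?_ ?_ ?_ ?_
  · rintro ⟨γ, δ⟩ hx
    simp only [mem_sigma, mem_powersetCard, subset_sdiff] at hx ⊢
    obtain ⟨⟨hγs, rfl⟩, ⟨hδs, hdisj⟩, rfl⟩ := hx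
    exact ⟨⟨union_subset hγs hδs, by rw [card_union_of_disjoint hdisj.symm, add_comm]⟩,
      subset_union_left, rfl⟩
  · rintro ⟨θ, γ⟩ hy
    simp only [mem_sigma, mem_powersetCard, subset_sdiff] at hy ⊢
    obtain ⟨⟨hθs, hθ⟩, hγθ, hγ⟩ := hy
    refine ⟨⟨hγθ.trans hθs, hγ⟩, ⟨sdiff_subset.trans hθs, disjoint_sdiff_self_left⟩, ?_⟩
    rw [card_sdiff_of_subset hγθ]
    omega
  · rintro ⟨γ, δ⟩ hx
    simp only [mem_sigma, mem_powersetCard, subset_sdiff] at hx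
    simp [union_sdiff_cancel_left hx.2.1.2.symm]
  · rintro ⟨θ, γ⟩ hy
    simp only [mem_sigma, mem_powersetCard] at hy
    simp [union_sdiff_of_subset hy.2.1]
  · rintro ⟨γ, δ⟩ -
    rfl

/-- For `c < j` both sides vanish: the left one because `γ` is too small, the right one because
`b + c - j < b` or `θ` is too small. -/
theorem sum_powersetCard_sum_powersetCard_of_card_eq {θ : Finset α} {b c : ℕ}
    (hθ : #θ = b + c) (j : ℕ) (g : Finset α → M) :
    ∑ γ ∈ θ.powersetCard c, ∑ β ∈ γ.powersetCard j, g β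
      = (b + c - j).choose b • ∑ β ∈ θ.powersetCard j, g β := by
  rcases le_or_gt j c with hjc | hcj
  · have key := sum_powersetCard_sum_powersetCard_sdiff θ (c - j) j fun β _ => g β
    rw [Nat.sub_add_cancel hjc] at key
    rw [← key, smul_sum]
    refine sum_congr rfl fun β hβ => ?_
    rw [mem_powersetCard] at hβ
    rw [sum_const, card_powersetCard, card_sdiff_of_subset hβ.1, hθ, hβ.2,
      Nat.choose_symm_of_eq_add (by omega : b + c - j = c - j + b)]
  · have hγ : ∀ γ ∈ θ.powersetCard c, γ.powersetCard j = ∅ := fun γ hγ =>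
      powersetCard_eq_empty.mpr ((mem_powersetCard.mp hγ).2 ▸ hcj)
    rw [sum_congr rfl fun γ h => by rw [hγ γ h, sum_empty], sum_const_zero]
    rcases le_or_gt j (b + c) with hj | hj
    · rw [Nat.choose_eq_zero_of_lt (by omega), zero_smul]
    · rw [powersetCard_eq_empty.mpr (hθ ▸ hj), sum_empty, smul_zero]

end Finset

theorem sum_esym_powersetCard_of_card_eq {p : ℕ} {θ : Finset (ZMod p)} {b c : ℕ}
    (hθ : #θ = b + c) (j : ℕ) :
    ∑ γ ∈ θ.powersetCard c, esym j γ = ((b + c - j).choose b : ZMod p) * esym j θ := by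
  simp only [esym, ← nsmul_eq_mul]
  exact sum_powersetCard_sum_powersetCard_of_card_eq hθ j _

/-- Lemma 2.7: the double sum over c-subsets and disjoint b-subsets of
sigma_j(gamma) * pi(gamma) * pi(alpha) equals C(b+c-j, b) * d_{b+c,j}. -/
theorem count_lemma (p : ℕ) [Fact p.Prime] (b c j : ℕ) :
    ∑ γ ∈ (Finset.univ : Finset (ZMod p)).powersetCard c,
      ∑ α ∈ ((Finset.univ : Finset (ZMod p)) \ γ).powersetCard b,
        esym j γ * piProd γ * piProd α
      = ((b + c - j).choose b : ZMod p) * dkj p (b + c) j := by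
  have hunion : ∀ γ, ∀ α ∈ ((univ : Finset (ZMod p)) \ γ).powersetCard b,
      esym j γ * piProd γ * piProd α = esym j γ * piProd (γ ∪ α) := fun γ α hα => by
    rw [mul_assoc, piProd, piProd, piProd,
      prod_union (subset_sdiff.mp (mem_powersetCard.mp hα).1).2.symm]
  rw [sum_congr rfl fun γ _ => sum_congr rfl (hunion γ),
    sum_powersetCard_sum_powersetCard_sdiff univ b c fun γ θ => esym j γ * piProd θ,
    dkj, mul_sum]
  refine sum_congr rfl fun θ hθ => ?_
  rw [← sum_mul, sum_esym_powersetCard_of_card_eq (mem_powersetCard.mp hθ).2]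
  ring
end

section
/- Let p be an odd prime and F a field of characteristic p. In the expansion of N(Z) = Π_{m∈F_p} (Z + mY + C(m,2)X) as A_0 + A_1 X + ⋯ + A_p X^p with A_i ∈ F[Y,Z], one has A_p = 0 and A_{p-1} = 0. -/
open MvPolynomial

/-- The norm N(Z) of the terminal variable of V_3, written as a polynomial in X over
F[Y,Z], where Y = X 0 and Z = X 1 and sigma^m(Z) = Z + m*Y + C(m,2)*X.
So N(Z) = prod over m in F_p of (Z + m*Y + C(m,2)*X). -/
noncomputable def normZ (p : ℕ) (F : Type*) [Field F] :
    Polynomial (MvPolynomial (Fin 2) F) :=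
  ∏ m ∈ Finset.range p,
    (Polynomial.C (X 1 + (m : MvPolynomial (Fin 2) F) * X 0) +
      Polynomial.C (m.choose 2 : MvPolynomial (Fin 2) F) * Polynomial.X)

/-! The factors for m = 0 and m = 1 are constant in X because C(0,2) = C(1,2) = 0, so N(Z)
has degree at most p - 2 in X. -/

open Finset

namespace Polynomial

variable {R : Type*}

theorem natDegree_C_add_C_mul_X_le [Semiring R] [DecidableEq R] (a b : R) :
    (C a + C b * X).natDegree ≤ if b ≠ 0 then 1 else 0 := by
  split_ifs with hb
  · rw [add_comm]
    exact natDegree_linear_le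
  · simp [not_not.1 hb]

theorem natDegree_prod_C_add_C_mul_X_le {ι : Type*} [CommSemiring R] [DecidableEq R]
    (s : Finset ι) (a b : ι → R) :
    (∏ i ∈ s, (C (a i) + C (b i) * X)).natDegree ≤ #{i ∈ s | b i ≠ 0} := by
  rw [card_filter]
  exact (natDegree_prod_le _ _).trans
    (sum_le_sum fun i _ => natDegree_C_add_C_mul_X_le (a i) (b i))

end Polynomial

theorem card_filter_choose_two_ne_zero_le {R : Type*} [Semiring R] [DecidableEq R] (n : ℕ) :
    #{m ∈ range n | (m.choose 2 : R) ≠ 0} ≤ n - 2 := by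
  calc #{m ∈ range n | (m.choose 2 : R) ≠ 0}
      ≤ #(Ico 2 n) := card_le_card fun m hm => by
        rw [mem_filter, mem_range] at hm
        have two_le : 2 ≤ m := by
          by_contra! hm2
          exact hm.2 (by simp [Nat.choose_eq_zero_of_lt hm2])
        exact mem_Ico.2 ⟨two_le, hm.1⟩
    _ = n - 2 := Nat.card_Ico 2 n

open Classical in
theorem natDegree_normZ_le (p : ℕ) (F : Type*) [Field F] : (normZ p F).natDegree ≤ p - 2 :=
  (Polynomial.natDegree_prod_C_add_C_mul_X_le _ _ _).trans
    (card_filter_choose_two_ne_zero_le (R := MvPolynomial (Fin 2) F) p)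

theorem normZ_coeff_top_general (p : ℕ) (hp : 2 < p) (F : Type*) [Field F] :
    (normZ p F).coeff p = 0 ∧ (normZ p F).coeff (p - 1) = 0 := by
  have hdeg := natDegree_normZ_le p F
  exact ⟨Polynomial.coeff_eq_zero_of_natDegree_lt (by omega),
    Polynomial.coeff_eq_zero_of_natDegree_lt (by omega)⟩

/-- Theorem 2.1 (part): writing N(Z) = A_0 + A_1 X + ... + A_p X^p with A_i in F[Y,Z],
one has A_p = 0 and A_{p-1} = 0. -/
theorem normZ_coeff_top (p : ℕ) [Fact p.Prime] (hp : 2 < p) (F : Type*) [Field F]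
    [CharP F p] :
    (normZ p F).coeff p = 0 ∧ (normZ p F).coeff (p - 1) = 0 :=
  normZ_coeff_top_general p hp F
end

section
/- Let p > 2 be prime and F a field of characteristic p. Let Z/p act on F[X_i,Y_i (i≤m), X_i,Y_i,Z_i (m<i≤m+ℓ)] with Δ(Z_i)=Y_i, Δ(Y_i)=X_i, Δ(X_i)=0, where Δ = σ-1. Let I be the ideal generated by {X_i : 1≤i≤m+ℓ} ∪ {Y_i Y_j : m<i≤j≤m+ℓ} ∪ {Y_i^p : 1≤i≤m} ∪ {Z_i^p : m<i≤m+ℓ}. If β is a monomial dividing (Y_1⋯Y_m Z_{m+1}⋯Z_{m+ℓ})^{p-1}, then Tr(β) = Σ_{j=0}^{p-1} σ^j(β) ∈ I. -/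
open MvPolynomial

/-- Variable X_i of F[mV_2 + lV_3] (i = 1,...,m+l). -/
noncomputable def XV (m l : ℕ) (F : Type*) [CommRing F] (i : Fin (m + l)) :
    MvPolynomial (Fin (m + l) ⊕ Fin (m + l) ⊕ Fin l) F := X (Sum.inl i)

/-- Variable Y_i of F[mV_2 + lV_3] (i = 1,...,m+l). -/
noncomputable def YV (m l : ℕ) (F : Type*) [CommRing F] (i : Fin (m + l)) :
    MvPolynomial (Fin (m + l) ⊕ Fin (m + l) ⊕ Fin l) F := X (Sum.inr (Sum.inl i))

/-- Variable Z_{m+j} of F[mV_2 + lV_3] (j = 1,...,l). -/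
noncomputable def ZV (m l : ℕ) (F : Type*) [CommRing F] (j : Fin l) :
    MvPolynomial (Fin (m + l) ⊕ Fin (m + l) ⊕ Fin l) F := X (Sum.inr (Sum.inr j))

/-- The generator sigma of Z/p on F[mV_2 + lV_3]: sigma(X_i) = X_i,
sigma(Y_i) = Y_i + X_i, sigma(Z_i) = Z_i + Y_i (note C(1,2) = 0). -/
noncomputable def sigmaV23 (m l : ℕ) (F : Type*) [CommRing F] :
    MvPolynomial (Fin (m + l) ⊕ Fin (m + l) ⊕ Fin l) F →ₐ[F]
      MvPolynomial (Fin (m + l) ⊕ Fin (m + l) ⊕ Fin l) F :=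
  aeval (Sum.elim (fun i => XV m l F i)
    (Sum.elim (fun i => YV m l F i + XV m l F i)
      (fun j => ZV m l F j + YV m l F (Fin.natAdd m j))))

/-- The monomial generating set Lambda of the Hilbert ideal of mV_2 + lV_3:
X_i for all i, Y_i^p for i <= m, Y_i*Y_j for m < i <= j, and Z_i^p for i > m. -/
noncomputable def LambdaV23 (p m l : ℕ) (F : Type*) [CommRing F] :
    Set (MvPolynomial (Fin (m + l) ⊕ Fin (m + l) ⊕ Fin l) F) :=
  (Set.range fun i : Fin (m + l) => XV m l F i) ∪
  (Set.range fun i : Fin m => YV m l F (Fin.castAdd l i) ^ p) ∪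
  {f | ∃ i j : Fin l, f = YV m l F (Fin.natAdd m i) * YV m l F (Fin.natAdd m j)} ∪
  (Set.range fun j : Fin l => ZV m l F j ^ p)

/-!
Write `Δ = σ - 1`, `I` for the ideal generated by `Λ` and `K` for the ideal generated by `Λ`
and the `Y_i` with `i > m`. Then `σ(I) ⊆ I` (Frobenius handles the `p`-th powers), `Δ` maps
everything into `K`, and `Δ(K) ⊆ I` because `K² ⊆ I`. Hence `Δ² ≡ 0` modulo `I`, so
`σ^c ≡ 1 + cΔ` modulo `I` and `Tr(f) ≡ p f + p(p-1)/2 · Δf = 0` for every `f`, as `p` is odd.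
-/

open MvPolynomial Finset

section Iterate

variable {M G : Type*} [AddCommGroup M] [FunLike G M M] [AddMonoidHomClass G M M]

theorem iterate_sub_sub_nsmul_mem {σ : G} {S : AddSubgroup M} (hS : ∀ s ∈ S, σ s ∈ S)
    {x : M} (hx : σ (σ x - x) - (σ x - x) ∈ S) (c : ℕ) :
    σ^[c] x - x - c • (σ x - x) ∈ S := by
  induction c with
  | zero => simp
  | succ c ih =>
    have key : σ^[c + 1] x - x - (c + 1) • (σ x - x)
        = σ (σ^[c] x - x - c • (σ x - x)) + c • (σ (σ x - x) - (σ x - x)) := by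
      simp only [Function.iterate_succ_apply', map_sub, map_nsmul, nsmul_sub, succ_nsmul]
      abel
    rw [key]
    exact S.add_mem (hS _ ih) (S.nsmul_mem hx c)

theorem sum_range_iterate_sub_mem {σ : G} {S : AddSubgroup M} (hS : ∀ s ∈ S, σ s ∈ S)
    {x : M} (hx : σ (σ x - x) - (σ x - x) ∈ S) (n : ℕ) :
    ∑ c ∈ range n, σ^[c] x - (n • x + (∑ c ∈ range n, c) • (σ x - x)) ∈ S := by
  have h : ∑ c ∈ range n, σ^[c] x - (n • x + (∑ c ∈ range n, c) • (σ x - x))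
      = ∑ c ∈ range n, (σ^[c] x - x - c • (σ x - x)) := by
    rw [sum_sub_distrib, sum_sub_distrib, sum_const, card_range, sum_smul]
    abel
  rw [h]
  exact S.sum_mem fun c _ => iterate_sub_sub_nsmul_mem hS hx c

end Iterate

theorem Nat.dvd_sum_range_id {p : ℕ} (hp : Odd p) : p ∣ ∑ i ∈ range p, i := by
  obtain ⟨k, rfl⟩ := hp
  refine ⟨k, ?_⟩
  rw [sum_range_id, Nat.add_sub_cancel, mul_left_comm, Nat.mul_div_cancel_left _ two_pos]

theorem sum_range_iterate_mem_of_odd {R G : Type*} [Ring R] [FunLike G R R]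
    [AddMonoidHomClass G R R] (p : ℕ) [CharP R p] (hp : Odd p) {σ : G} {S : AddSubgroup R}
    (hS : ∀ s ∈ S, σ s ∈ S) {x : R} (hx : σ (σ x - x) - (σ x - x) ∈ S) :
    ∑ c ∈ range p, σ^[c] x ∈ S := by
  have hzero : p • x + (∑ c ∈ range p, c) • (σ x - x) = 0 := by
    rw [nsmul_eq_mul, nsmul_eq_mul, CharP.cast_eq_zero,
      (CharP.cast_eq_zero_iff R p _).2 (Nat.dvd_sum_range_id hp), zero_mul, zero_mul, add_zero]
  simpa only [hzero, sub_zero] using sum_range_iterate_sub_mem hS hx p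

theorem MvPolynomial.algHom_sub_self_mem {ι R : Type*} [CommRing R]
    {f : MvPolynomial ι R →ₐ[R] MvPolynomial ι R} {J : Ideal (MvPolynomial ι R)}
    (h : ∀ i, f (X i) - X i ∈ J) (x : MvPolynomial ι R) : f x - x ∈ J := by
  have hf : (Ideal.Quotient.mkₐ R J).comp f = Ideal.Quotient.mkₐ R J :=
    algHom_ext fun i => by simpa [Ideal.Quotient.mkₐ_eq_mk, Ideal.Quotient.eq] using h i
  simpa [Ideal.Quotient.mkₐ_eq_mk, Ideal.Quotient.eq] using congr($hf x)

theorem sub_self_mem_of_mem_span {R G : Type*} [CommRing R] [FunLike G R R]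
    [RingHomClass G R R] {σ : G} {I : Ideal R} {s : Set R} (hs : ∀ g ∈ s, σ g - g ∈ I)
    (hσ : ∀ r, σ r - r ∈ Ideal.span s) (hsq : Ideal.span s * Ideal.span s ≤ I) {x : R}
    (hx : x ∈ Ideal.span s) : σ x - x ∈ I := by
  induction hx using Submodule.span_induction with
  | mem g hg => exact hs g hg
  | zero => simp
  | add x y _ _ hx hy =>
    rw [map_add, add_sub_add_comm]
    exact I.add_mem hx hy
  | smul r x hxs hx =>
    rw [smul_eq_mul, map_mul, show σ r * σ x - r * x = σ r * (σ x - x) + (σ r - r) * x by ring]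
    exact I.add_mem (I.mul_mem_left _ hx) (hsq (Ideal.mul_mem_mul (hσ r) hxs))

/-- `Λ` together with the `Y_i` for `i > m`: `σ - 1` maps every polynomial into the ideal
this generates, and that ideal into the ideal generated by `Λ`. -/
noncomputable def LambdaV23Y (p m l : ℕ) (F : Type*) [CommRing F] :
    Set (MvPolynomial (Fin (m + l) ⊕ Fin (m + l) ⊕ Fin l) F) :=
  LambdaV23 p m l F ∪ Set.range fun j : Fin l => YV m l F (Fin.natAdd m j)

section V23

variable (p m l : ℕ) (F : Type*) [CommRing F]

@[simp]
theorem sigmaV23_XV (i : Fin (m + l)) : sigmaV23 m l F (XV m l F i) = XV m l F i := by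
  simp [sigmaV23, XV]

@[simp]
theorem sigmaV23_YV (i : Fin (m + l)) :
    sigmaV23 m l F (YV m l F i) = YV m l F i + XV m l F i := by
  simp [sigmaV23, XV, YV]

@[simp]
theorem sigmaV23_ZV (j : Fin l) :
    sigmaV23 m l F (ZV m l F j) = ZV m l F j + YV m l F (Fin.natAdd m j) := by
  simp [sigmaV23, XV, YV, ZV]

theorem XV_mem_span_LambdaV23 (i : Fin (m + l)) : XV m l F i ∈ Ideal.span (LambdaV23 p m l F) :=
  Ideal.subset_span <| .inl <| .inl <| .inl ⟨i, rfl⟩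

theorem YV_pow_mem_span_LambdaV23 (i : Fin m) :
    YV m l F (Fin.castAdd l i) ^ p ∈ Ideal.span (LambdaV23 p m l F) :=
  Ideal.subset_span <| .inl <| .inl <| .inr ⟨i, rfl⟩

theorem YV_mul_YV_mem_span_LambdaV23 (i j : Fin l) :
    YV m l F (Fin.natAdd m i) * YV m l F (Fin.natAdd m j) ∈ Ideal.span (LambdaV23 p m l F) :=
  Ideal.subset_span <| .inl <| .inr ⟨i, j, rfl⟩

theorem ZV_pow_mem_span_LambdaV23 (j : Fin l) :
    ZV m l F j ^ p ∈ Ideal.span (LambdaV23 p m l F) :=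
  Ideal.subset_span <| .inr ⟨j, rfl⟩

theorem span_LambdaV23_le_comap_sigmaV23 [Fact p.Prime] [CharP F p] :
    Ideal.span (LambdaV23 p m l F) ≤ (Ideal.span (LambdaV23 p m l F)).comap (sigmaV23 m l F) := by
  have hp := (Fact.out : p.Prime).two_le
  refine Ideal.span_le.2 fun g hg => ?_
  obtain (((⟨i, rfl⟩ | ⟨i, rfl⟩) | ⟨i, j, rfl⟩) | ⟨j, rfl⟩) := hg
  · simpa using XV_mem_span_LambdaV23 p m l F i
  · rw [SetLike.mem_coe, Ideal.mem_comap, map_pow, sigmaV23_YV, add_pow_char]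
    exact Ideal.add_mem _ (YV_pow_mem_span_LambdaV23 p m l F i)
      (Ideal.pow_mem_of_mem _ (XV_mem_span_LambdaV23 p m l F _) p (by omega))
  · rw [SetLike.mem_coe, Ideal.mem_comap, map_mul, sigmaV23_YV, sigmaV23_YV, add_mul, mul_add]
    exact Ideal.add_mem _
      (Ideal.add_mem _ (YV_mul_YV_mem_span_LambdaV23 p m l F i j)
        (Ideal.mul_mem_left _ _ (XV_mem_span_LambdaV23 p m l F _)))
      (Ideal.mul_mem_right _ _ (XV_mem_span_LambdaV23 p m l F _))
  · rw [SetLike.mem_coe, Ideal.mem_comap, map_pow, sigmaV23_ZV, add_pow_char]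
    refine Ideal.add_mem _ (ZV_pow_mem_span_LambdaV23 p m l F j)
      (Ideal.mem_of_dvd _ ?_ (YV_mul_YV_mem_span_LambdaV23 p m l F j j))
    rw [← sq]
    exact pow_dvd_pow _ hp

theorem sigmaV23_sub_self_mem_span_LambdaV23Y
    (x : MvPolynomial (Fin (m + l) ⊕ Fin (m + l) ⊕ Fin l) F) :
    sigmaV23 m l F x - x ∈ Ideal.span (LambdaV23Y p m l F) := by
  refine algHom_sub_self_mem (fun v => ?_) x
  rcases v with i | i | j
  · show sigmaV23 m l F (XV m l F i) - XV m l F i ∈ _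
    simp
  · show sigmaV23 m l F (YV m l F i) - YV m l F i ∈ _
    rw [sigmaV23_YV, add_sub_cancel_left]
    exact Ideal.span_mono Set.subset_union_left (XV_mem_span_LambdaV23 p m l F i)
  · show sigmaV23 m l F (ZV m l F j) - ZV m l F j ∈ _
    rw [sigmaV23_ZV, add_sub_cancel_left]
    exact Ideal.subset_span (.inr ⟨j, rfl⟩)

theorem span_LambdaV23Y_mul_self_le :
    Ideal.span (LambdaV23Y p m l F) * Ideal.span (LambdaV23Y p m l F) ≤
      Ideal.span (LambdaV23 p m l F) := by
  rw [Ideal.span_mul_span', Ideal.span_le]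
  rintro _ ⟨x, hx, y, hy, rfl⟩
  rcases hx with hx | ⟨i, rfl⟩
  · exact Ideal.mul_mem_right _ _ (Ideal.subset_span hx)
  rcases hy with hy | ⟨j, rfl⟩
  · exact Ideal.mul_mem_left _ _ (Ideal.subset_span hy)
  exact YV_mul_YV_mem_span_LambdaV23 p m l F i j

theorem sigmaV23_sub_self_mem_span_LambdaV23 [Fact p.Prime] [CharP F p]
    {x : MvPolynomial (Fin (m + l) ⊕ Fin (m + l) ⊕ Fin l) F}
    (hx : x ∈ Ideal.span (LambdaV23Y p m l F)) :
    sigmaV23 m l F x - x ∈ Ideal.span (LambdaV23 p m l F) := by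
  refine sub_self_mem_of_mem_span (fun g hg => ?_) (sigmaV23_sub_self_mem_span_LambdaV23Y p m l F)
    (span_LambdaV23Y_mul_self_le p m l F) hx
  rcases hg with hg | ⟨j, rfl⟩
  · exact Ideal.sub_mem _ (span_LambdaV23_le_comap_sigmaV23 p m l F (Ideal.subset_span hg))
      (Ideal.subset_span hg)
  · simpa using XV_mem_span_LambdaV23 p m l F (Fin.natAdd m j)

end V23

theorem transfer_mem_V23_general (p m l : ℕ) (hp : 2 < p) (F : Type*) [Field F]
    [CharP F p] (a : Fin m → ℕ) (b : Fin l → ℕ) :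
    (∑ c ∈ Finset.range p, (⇑(sigmaV23 m l F))^[c]
        ((∏ i, YV m l F (Fin.castAdd l i) ^ a i) * ∏ j, ZV m l F j ^ b j))
      ∈ Ideal.span (LambdaV23 p m l F) := by
  have hprime := CharP.char_is_prime_of_two_le F p hp.le
  have : Fact p.Prime := ⟨hprime⟩
  exact sum_range_iterate_mem_of_odd p (hprime.odd_of_ne_two hp.ne')
    (S := (Ideal.span (LambdaV23 p m l F)).toAddSubgroup)
    (fun _ hs => span_LambdaV23_le_comap_sigmaV23 p m l F hs)
    (sigmaV23_sub_self_mem_span_LambdaV23 p m l F (sigmaV23_sub_self_mem_span_LambdaV23Y p m l F _))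

/-- Lemma 3.3: if beta is a monomial dividing (Y_1...Y_m Z_{m+1}...Z_{m+l})^(p-1), then
Tr(beta), the sum of sigma^j(beta) over j = 0,...,p-1, lies in the ideal generated by
Lambda. -/
theorem transfer_mem_V23 (p m l : ℕ) [Fact p.Prime] (hp : 2 < p) (F : Type*) [Field F]
    [CharP F p] (a : Fin m → ℕ) (b : Fin l → ℕ)
    (ha : ∀ i, a i ≤ p - 1) (hb : ∀ j, b j ≤ p - 1) :
    (∑ c ∈ Finset.range p, (⇑(sigmaV23 m l F))^[c]
        ((∏ i, YV m l F (Fin.castAdd l i) ^ a i) * ∏ j, ZV m l F j ^ b j))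
      ∈ Ideal.span (LambdaV23 p m l F) :=
  transfer_mem_V23_general p m l hp F a b
end

section
/- Let p be a prime, F a field of characteristic p, and Z/p act on the polynomial ring F[X_1,…,X_5] with a generator σ satisfying σ(X_i) = X_i + X_{i-1} + (lower Jordan terms), i.e., σ^j(X_5) ≡ X_5 + jX_4 + C(j,2)X_3 + C(j,3)X_2 + C(j,4)X_1. Suppose a, b, c, d are non-negative integers with c + 2b + 3a < p-1. Then the monomial X_2^a X_3^b X_4^c X_5^d does not appear (has zero coefficient) in the transfer Tr(X_5^i) = Σ_{j∈F_p} σ^j(X_5^i). -/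
open MvPolynomial

/-- The generator sigma of Z/p acting on F[V_5] = F[X_1,...,X_5] as a single Jordan
block: sigma(X_1) = X_1 and sigma(X_i) = X_i + X_(i-1) for i > 1 (0-indexed here),
so that sigma^j(X_5) = X_5 + j X_4 + C(j,2) X_3 + C(j,3) X_2 + C(j,4) X_1. -/
noncomputable def sigmaV5 (F : Type*) [CommRing F] :
    MvPolynomial (Fin 5) F →ₐ[F] MvPolynomial (Fin 5) F :=
  aeval (fun i => if i = 0 then X 0 else X i + X (i - 1))

/-!
Since `σ^j(X₅) = ∑ₜ C(j, 4 - t) Xₜ` arises from `∑ₜ Xₜ` by rescaling each variable, the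
coefficient of `X^m` in `σ^j(X₅^i)` is `∏ₜ C(j, 4 - t)^{mₜ}` times the coefficient of `X^m`
in `(∑ₜ Xₜ)^i`, which does not depend on `j`. So the coefficient in the transfer is a constant
multiple of `∑_{j ∈ 𝔽_p} C(j,3)^a C(j,2)^b j^c`. As `k! C(j,k)` is the falling factorial
`j (j - 1) ⋯ (j - k + 1)`, up to the unit `3!^a 2!^b` this is the sum over `𝔽_p` of a
polynomial of degree `3a + 2b + c < p - 1`, and it vanishes because the power sums
`∑_{x ∈ 𝔽_p} x^k` vanish for `k < p - 1`.
-/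

open Finset

theorem coeff_aeval_C_mul_X {σ R : Type*} [Fintype σ] [CommSemiring R] (c : σ → R)
    (m : σ →₀ ℕ) (P : MvPolynomial σ R) :
    coeff m (aeval (fun s => C (c s) * X s) P) = (∏ s, c s ^ m s) * coeff m P := by
  classical
  induction P using MvPolynomial.induction_on' with
  | monomial u r =>
    have hmon : aeval (fun s => C (c s) * X s) (monomial u r) =
        monomial u (r * ∏ s, c s ^ u s) := by
      rw [aeval_monomial, monomial_eq, Finsupp.prod_fintype _ _ (by simp),
        Finsupp.prod_fintype _ _ (by simp)]
      simp only [mul_pow, prod_mul_distrib, map_mul, map_prod, map_pow, algebraMap_eq]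
      ring
    rw [hmon, coeff_monomial, coeff_monomial]
    split_ifs with h <;> simp [h, mul_comm]
  | add P Q hP hQ => rw [map_add, coeff_add, coeff_add, hP, hQ, mul_add]

theorem sigmaV5_iterate_X_four {F : Type*} [CommRing F] (j : ℕ) :
    (sigmaV5 F)^[j] (X 4) = ∑ t : Fin 5, C ((j.choose (4 - t) : ℕ) : F) * X t := by
  induction j with
  | zero => simp [Fin.sum_univ_five]
  | succ j ih =>
    have hX (t : Fin 5) : sigmaV5 F (X t) = if t = 0 then X 0 else X t + X (t - 1) :=
      aeval_X _ _
    rw [Function.iterate_succ_apply', ih]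
    simp only [Fin.sum_univ_five, Fin.coe_ofNat_eq_mod, Nat.reduceMod, Nat.reduceSub, map_add,
      map_mul, map_natCast, hX, Fin.reduceEq, Fin.reduceSub, ↓reduceIte, Nat.choose_succ_succ,
      Nat.choose_zero_right, Nat.cast_add]
    ring

theorem sum_range_natCast_eq_sum_zmod {M : Type*} [AddCommMonoid M] (p : ℕ) [NeZero p]
    (f : ZMod p → M) : ∑ j ∈ range p, f j = ∑ x, f x :=
  sum_nbij' (↑) ZMod.val (fun _ _ => mem_univ _) (fun x _ => mem_range.2 x.val_lt)
    (fun _ hj => ZMod.val_cast_of_lt (mem_range.1 hj)) (fun x _ => ZMod.natCast_zmod_val x)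
    (fun _ _ => rfl)

theorem factorial_mul_choose_eq_eval_descPochhammer {R : Type*} [CommRing R] (j k : ℕ) :
    (k.factorial * j.choose k : R) = (descPochhammer R k).eval (j : R) := by
  rw [descPochhammer_eval_eq_descFactorial, Nat.descFactorial_eq_factorial_mul_choose,
    Nat.cast_mul]

section CharP

variable (p : ℕ) [Fact p.Prime] {F : Type*} [Field F] [CharP F p]

theorem cast_factorial_ne_zero_of_lt {k : ℕ} (hk : k < p) : (k.factorial : F) ≠ 0 := by
  rw [Ne, CharP.cast_eq_zero_iff F p, Nat.Prime.dvd_factorial Fact.out]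
  omega

theorem sum_range_natCast_pow_eq_zero {k : ℕ} (hk : k < p - 1) :
    ∑ j ∈ range p, (j : F) ^ k = 0 := by
  have hZ : ∑ x : ZMod p, x ^ k = 0 :=
    FiniteField.sum_pow_lt_card_sub_one _ k (by rwa [ZMod.card])
  calc ∑ j ∈ range p, (j : F) ^ k
      = ZMod.castHom (dvd_refl p) F (∑ j ∈ range p, (j : ZMod p) ^ k) := by simp
    _ = 0 := by rw [sum_range_natCast_eq_sum_zmod p (· ^ k), hZ, map_zero]

theorem sum_range_eval_eq_zero {q : Polynomial F} (hq : q.natDegree < p - 1) :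
    ∑ j ∈ range p, q.eval (j : F) = 0 := by
  simp_rw [Polynomial.eval_eq_sum_range]
  rw [sum_comm]
  refine sum_eq_zero fun k hk => ?_
  rw [← mul_sum, sum_range_natCast_pow_eq_zero p (by grind), mul_zero]

theorem sum_range_prod_choose_pow_eq_zero {ι : Type*} [Fintype ι] (κ e : ι → ℕ)
    (h : ∑ t, κ t * e t < p - 1) :
    ∑ j ∈ range p, ∏ t, (j.choose (κ t) : F) ^ e t = 0 := by
  set D : F := ∏ t, ((κ t).factorial : F) ^ e t
  set q : Polynomial F := ∏ t, descPochhammer F (κ t) ^ e t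
  have hD : D ≠ 0 := by
    refine prod_ne_zero_iff.2 fun t _ => ?_
    rcases Nat.eq_zero_or_pos (e t) with he | he
    · simp [he]
    · have h1 : κ t ≤ κ t * e t := Nat.le_mul_of_pos_right _ he
      have h2 := single_le_sum (fun t _ => Nat.zero_le (κ t * e t)) (mem_univ t)
      exact pow_ne_zero _ (cast_factorial_ne_zero_of_lt p (by omega))
  have hq (j : ℕ) : D * ∏ t, (j.choose (κ t) : F) ^ e t = q.eval (j : F) := by
    simp only [D, q, Polynomial.eval_prod, Polynomial.eval_pow, ← prod_mul_distrib, ← mul_pow,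
      factorial_mul_choose_eq_eval_descPochhammer]
  have hdeg : q.natDegree < p - 1 := by
    refine (Polynomial.natDegree_prod_le _ _).trans_lt ((sum_le_sum fun t _ => ?_).trans_lt h)
    refine Polynomial.natDegree_pow_le.trans ?_
    rw [descPochhammer_natDegree, mul_comm]
  refine (mul_eq_zero.1 ?_).resolve_left hD
  rw [mul_sum]
  simp_rw [hq]
  exact sum_range_eval_eq_zero p hdeg

end CharP

/-- Lemma 5.3(i): if c + 2b + 3a < p - 1, then the monomial X_2^a X_3^b X_4^c X_5^d does
not appear in the transfer Tr(X_5^i) = sum over j in F_p of sigma^j(X_5^i). -/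
theorem coeff_transfer_V5 (p : ℕ) [Fact p.Prime] (F : Type*) [Field F] [CharP F p]
    (a b c d i : ℕ) (h : c + 2 * b + 3 * a < p - 1) :
    MvPolynomial.coeff
      (Finsupp.single (1 : Fin 5) a + Finsupp.single 2 b + Finsupp.single 3 c +
        Finsupp.single 4 d)
      (∑ j ∈ Finset.range p, (⇑(sigmaV5 F))^[j] ((X 4 : MvPolynomial (Fin 5) F) ^ i))
      = 0 := by
  set m : Fin 5 →₀ ℕ := Finsupp.single 1 a + Finsupp.single 2 b + Finsupp.single 3 c +
    Finsupp.single 4 d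
  have hterm (j : ℕ) : coeff m ((sigmaV5 F)^[j] (X 4 ^ i)) =
      (∏ t : Fin 5, (j.choose (4 - t) : F) ^ m t) * coeff m ((∑ t, X t) ^ i) := by
    rw [iterate_map_pow, sigmaV5_iterate_X_four, ← coeff_aeval_C_mul_X, map_pow, map_sum]
    simp only [aeval_X]
  have hdeg : ∑ t : Fin 5, (4 - t : ℕ) * m t < p - 1 := by
    simp only [m, Fin.sum_univ_five, Finsupp.coe_add, Pi.add_apply, Finsupp.single_apply,
      Fin.coe_ofNat_eq_mod, Nat.reduceMod, Nat.reduceSub, Fin.reduceEq, ↓reduceIte]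
    omega
  rw [coeff_sum, sum_congr rfl fun j _ => hterm j, ← sum_mul,
    sum_range_prod_choose_pow_eq_zero p _ _ hdeg, zero_mul]
end
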